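/- Let G and H be digraphs and let C = (w_1, …, w_t) with w_i = (u_i, x_i) be a directed cycle in the lexicographic product G[H]. Then either the subdigraph of G induced on the set U = {u_1, …, u_t} contains a directed cycle, or U has exactly one element and (x_1, …, x_t) is a directed cycle in H. -/

import Mathlib

/-! Project a directed cycle of `G[H]` to `G`: every arc becomes an arc of `G` or stays at one
vertex. If the projection is not constant, its vertices are mutually reachable in `G` and two of
them differ, so they carry a closed walk of `G`, and a shortest closed walk is a directed cycle.
If it is constant, `G` being loopless forces every arc of the cycle to be an arc of `H` in the
second coordinate. -/

/-- A directed cycle in the digraph with arc relation `Adj`: a list of at least two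
distinct vertices with an arc between consecutive vertices and an arc from the last
vertex back to the first. -/
def IsDicycle {V : Type*} (Adj : V → V → Prop) (l : List V) : Prop :=
  2 ≤ l.length ∧ l.Nodup ∧ l.Chain' Adj ∧
    ∀ h : l ≠ [], Adj (l.getLast h) (l.head h)

/-- A set of vertices is acyclic if the induced subdigraph contains no directed cycle. -/
def AcyclicSet {V : Type*} (Adj : V → V → Prop) (S : Set V) : Prop :=
  ¬ ∃ l : List V, (∀ v ∈ l, v ∈ S) ∧ IsDicycle Adj l

/-- A coloring is acyclic if every color class is an acyclic set. -/
def IsAcyclicColoring {V C : Type*} (Adj : V → V → Prop) (f : V → C) : Prop :=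
  ∀ c : C, AcyclicSet Adj (f ⁻¹' {c})

/-- The dichromatic number: the least `k` admitting an acyclic `k`-coloring. -/
noncomputable def dichromaticNumber {V : Type*} (Adj : V → V → Prop) : ℕ :=
  sInf {k : ℕ | ∃ f : V → Fin k, IsAcyclicColoring Adj f}

/-- Cartesian product of digraphs. -/
def cartAdj {V W : Type*} (GA : V → V → Prop) (HA : W → W → Prop) :
    V × W → V × W → Prop :=
  fun p q => (p.1 = q.1 ∧ HA p.2 q.2) ∨ (GA p.1 q.1 ∧ p.2 = q.2)

/-- Direct product of digraphs. -/
def directAdj {V W : Type*} (GA : V → V → Prop) (HA : W → W → Prop) :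
    V × W → V × W → Prop :=
  fun p q => GA p.1 q.1 ∧ HA p.2 q.2

/-- Strong product of digraphs. -/
def strongAdj {V W : Type*} (GA : V → V → Prop) (HA : W → W → Prop) :
    V × W → V × W → Prop :=
  fun p q => (p.1 = q.1 ∧ HA p.2 q.2) ∨ (GA p.1 q.1 ∧ p.2 = q.2) ∨
    (GA p.1 q.1 ∧ HA p.2 q.2)

/-- Lexicographic product of digraphs. -/
def lexAdj {V W : Type*} (GA : V → V → Prop) (HA : W → W → Prop) :
    V × W → V × W → Prop :=
  fun p q => GA p.1 q.1 ∨ (p.1 = q.1 ∧ HA p.2 q.2)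

/-- The dicycle on `n` vertices: arcs `i → i + 1` on `ZMod n`. -/
def dicycleAdj (n : ℕ) : ZMod n → ZMod n → Prop := fun i j => j = i + 1

/-- The complete digraph on `k` vertices. -/
def completeAdj (k : ℕ) : Fin k → Fin k → Prop := fun i j => i ≠ j

open Relation List

theorem List.exists_eq_append_cons_append_cons_of_not_nodup {α : Type*} {l : List α}
    (h : ¬l.Nodup) : ∃ a x b d, l = a ++ x :: (b ++ x :: d) := by
  induction l with
  | nil => exact absurd nodup_nil h
  | cons y l ih =>
    by_cases hy : y ∈ l
    · obtain ⟨b, d, rfl⟩ := append_of_mem hy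
      exact ⟨[], y, b, d, rfl⟩
    · obtain ⟨a, x, b, d, rfl⟩ := ih fun hl => h (nodup_cons.2 ⟨hy, hl⟩)
      exact ⟨y :: a, x, b, d, rfl⟩

section Dicycle

variable {α β : Type*} {R : α → α → Prop} {S : β → β → Prop} {l : List α}

/-- Cut the closed walk at a repeated vertex and recurse on the shorter closed walk between the
two occurrences. -/
theorem exists_isDicycle_of_isChain_cons_append_singleton (hR : Irreflexive R) {v : α}
    (h : (v :: l ++ [v]).IsChain R) : ∃ c, IsDicycle R c := by
  induction hn : l.length using Nat.strong_induction_on generalizing v l with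
  | _ n ih =>
  by_cases hnd : (v :: l).Nodup
  · have hlen : 2 ≤ (v :: l).length := by
      cases l with
      | nil => exact absurd (isChain_pair.1 h) (hR v)
      | cons w l => simp
    exact ⟨v :: l, hlen, hnd, h.left_of_append,
      fun _ => h.rel_getLast_head_of_append (cons_ne_nil _ _) (cons_ne_nil _ _)⟩
  · obtain ⟨a, x, b, d, hvl⟩ := exists_eq_append_cons_append_cons_of_not_nodup hnd
    have hx : (x :: b ++ [x]).IsChain R := h.infix ⟨a, d ++ [v], by rw [hvl]; simp⟩
    have hb : b.length < n := by
      have := congrArg length hvl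
      simp only [length_cons, length_append] at this
      omega
    exact ih b.length hb hx rfl

theorem exists_isDicycle_of_transGen_self (hR : Irreflexive R) {v : α} (h : TransGen R v v) :
    ∃ c, IsDicycle R c := by
  obtain ⟨w, hvw, hwv⟩ := TransGen.tail'_iff.1 h
  obtain ⟨l, hl, hlast⟩ := exists_isChain_cons_of_relationReflTransGen hvw
  refine exists_isDicycle_of_isChain_cons_append_singleton hR
    (hl.append (isChain_singleton v) ?_)
  simpa [getLast?_eq_some_getLast (cons_ne_nil v l), hlast] using hwv

namespace IsDicycle

theorem map {f : α → β} (hf : Set.InjOn f {x | x ∈ l})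
    (hRS : ∀ a ∈ l, ∀ b ∈ l, R a b → S (f a) (f b)) (hl : IsDicycle R l) :
    IsDicycle S (l.map f) := by
  obtain ⟨hlen, hnd, hch, hclose⟩ := hl
  refine ⟨by simpa using hlen, hnd.map_on fun a ha b hb => @hf a ha b hb,
    (isChain_map f).2 (hch.imp_of_mem_imp fun a b ha hb => hRS a ha b hb), fun hne => ?_⟩
  have hne' : l ≠ [] := by simpa using hne
  rw [getLast_map, head_map]
  exact hRS _ (getLast_mem hne') _ (head_mem hne') (hclose hne')

theorem of_map {f : α → β} (hl : IsDicycle S (l.map f)) :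
    IsDicycle (fun a b => S (f a) (f b)) l := by
  obtain ⟨hlen, hnd, hch, hclose⟩ := hl
  refine ⟨by simpa using hlen, hnd.of_map f, (isChain_map f).1 hch, fun hne => ?_⟩
  have := hclose (by simpa using hne)
  rwa [getLast_map, head_map] at this

theorem reflTransGen (hl : IsDicycle R l) {x y : α} (hx : x ∈ l) (hy : y ∈ l) :
    ReflTransGen R x y := by
  obtain ⟨hlen, -, hch, hclose⟩ := hl
  have hne : l ≠ [] := ne_nil_of_length_pos (by omega)
  have hx_last : ReflTransGen R x (l.getLast hne) :=
    hch.backwards_induction (ReflTransGen R · (l.getLast hne)) l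
      (fun _ _ hab hb => hb.head hab) (fun _ => .refl) x hx
  have hhead_y : ReflTransGen R (l.head hne) y :=
    hch.induction (ReflTransGen R (l.head hne) ·) l
      (fun _ _ hab ha => ha.tail hab) (fun _ => .refl) y hy
  exact hx_last.trans (hhead_y.head (hclose hne))

/-- The image vertices are mutually reachable in `S` and not all equal, so they lie on a closed
walk of `S` inside the image. -/
theorem exists_isDicycle_subset_map (hS : Irreflexive S) {f : α → β}
    (hf : ∀ a b, R a b → ReflGen S (f a) (f b)) (hl : IsDicycle R l) {x y : α}
    (hx : x ∈ l) (hy : y ∈ l) (hxy : f x ≠ f y) :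
    ∃ c, c ⊆ l.map f ∧ IsDicycle S c := by
  let U := {u // u ∈ l.map f}
  let g : {a // a ∈ l} → U := fun a => ⟨f a, mem_map_of_mem a.2⟩
  have hattach : IsDicycle (fun a b : {a // a ∈ l} => R a b) l.attach :=
    of_map (by rwa [attach_map_subtype_val])
  have hreach (a b : {a // a ∈ l}) : ReflTransGen (fun u v : U => S u v) (g a) (g b) := by
    refine (hattach.reflTransGen (mem_attach l a) (mem_attach l b)).lift' g fun a b hab => ?_
    change ReflTransGen _ (g a) (g b)
    rcases (reflGen_iff _ _ _).1 (hf a b hab) with heq | hS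
    · rw [show g a = g b from Subtype.ext heq.symm]
    · exact .single hS
  have hgxy : g ⟨x, hx⟩ ≠ g ⟨y, hy⟩ := fun h => hxy (congrArg Subtype.val h)
  have hcyc : TransGen (fun u v : U => S u v) (g ⟨x, hx⟩) (g ⟨x, hx⟩) :=
    ((reflTransGen_iff_eq_or_transGen.1 (hreach _ _)).resolve_left hgxy.symm).trans_left
      (hreach _ _)
  obtain ⟨c, hc⟩ := exists_isDicycle_of_transGen_self (fun u => hS u.1) hcyc
  refine ⟨c.map Subtype.val, fun v hv => ?_,
    hc.map Subtype.val_injective.injOn fun _ _ _ _ => id⟩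
  obtain ⟨u, -, rfl⟩ := mem_map.1 hv
  exact u.2

end IsDicycle

end Dicycle

section Lex

variable {V W : Type*} {GA : V → V → Prop} {HA : W → W → Prop}

theorem reflGen_fst_of_lexAdj {p q : V × W} (h : lexAdj GA HA p q) : ReflGen GA p.1 q.1 := by
  rcases h with hG | ⟨heq, -⟩
  · exact .single hG
  · exact heq ▸ .refl

theorem IsDicycle.map_snd_of_lexAdj (hG : Irreflexive GA) {l : List (V × W)}
    (hl : IsDicycle (lexAdj GA HA) l) (hfst : ∀ p ∈ l, ∀ q ∈ l, p.1 = q.1) :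
    IsDicycle HA (l.map Prod.snd) := by
  refine hl.map (fun p hp q hq h => Prod.ext (hfst p hp q hq) h) fun p hp q hq hpq => ?_
  rcases hpq with hGpq | ⟨-, hH⟩
  · exact absurd (hfst p hp q hq ▸ hGpq) (hG q.1)
  · exact hH

end Lex

theorem stmt18_general {V W : Type*} (GA : V → V → Prop) (HA : W → W → Prop)
    (hG : Irreflexive GA)
    (l : List (V × W)) (hl : IsDicycle (lexAdj GA HA) l) :
    (∃ lG : List V, (∀ v ∈ lG, v ∈ l.map Prod.fst) ∧ IsDicycle GA lG) ∨
    ((∀ p ∈ l, ∀ q ∈ l, p.1 = q.1) ∧ IsDicycle HA (l.map Prod.snd)) := by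
  by_cases hfst : ∀ p ∈ l, ∀ q ∈ l, p.1 = q.1
  · exact Or.inr ⟨hfst, hl.map_snd_of_lexAdj hG hfst⟩
  · push Not at hfst
    obtain ⟨p, hp, q, hq, hpq⟩ := hfst
    exact Or.inl (hl.exists_isDicycle_subset_map hG (fun _ _ => reflGen_fst_of_lexAdj) hp hq hpq)

theorem stmt18 {V W : Type*} (GA : V → V → Prop) (HA : W → W → Prop)
    (hG : Irreflexive GA) (hH : Irreflexive HA)
    (l : List (V × W)) (hl : IsDicycle (lexAdj GA HA) l) :
    (∃ lG : List V, (∀ v ∈ lG, v ∈ l.map Prod.fst) ∧ IsDicycle GA lG) ∨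
    ((∀ p ∈ l, ∀ q ∈ l, p.1 = q.1) ∧ IsDicycle HA (l.map Prod.snd)) :=
  stmt18_general GA HA hG l hl
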